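/- arXiv:2401.12550 — 2 statements merged into one kernel-verified Lean document; each statement's English description precedes it below -/
import Mathlib

section
/- The ReLU image of a single polytope is a union of at most 2^n polytopes: for any finite set V ⊆ (Fin n → ℝ) there exists a family of finite sets W : (Fin n → Bool) → Set (Fin n → ℝ), each W s finite (possibly empty), such that the image of convexHull ℝ V under the ReLU map r equals ⋃ s, convexHull ℝ (W s). -/
/-- The componentwise ReLU map on `ℝ^n`. -/
noncomputable def relu {n : ℕ} (x : Fin n → ℝ) : Fin n → ℝ :=
  fun i => max (x i) 0

/-!
On the closed orthant with sign pattern `s`, ReLU agrees with the linear map that zeroes the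
coordinates the pattern requires to be nonpositive, so `relu '' P` is the union over all `s` of
linear images of the intersections of `P` with these orthants. Each piece is a polytope, because
cutting `convexHull V` by a halfspace `0 ≤ f` gives the convex hull of the points of `V` in the
halfspace together with the points where the segments `[u, v]`, `f u < 0 ≤ f v`, cross `ker f`.
For the hard inclusion, `v ↦ kerCrossing f u v` and `u ↦ kerCrossing f u v` are perspective
maps, which map convex hulls into convex hulls.
-/

open Set

section Perspective
variable {𝕜 E F : Type*} [Field 𝕜] [LinearOrder 𝕜] [IsStrictOrderedRing 𝕜]
  [AddCommGroup E] [Module 𝕜 E] [AddCommGroup F] [Module 𝕜 F]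

theorem perspective_mem_segment (L : E →ᵃ[𝕜] F) (ℓ : E →ᵃ[𝕜] 𝕜) {x y z : E}
    (hx : 0 < ℓ x) (hy : 0 < ℓ y) (hz : z ∈ segment 𝕜 x y) :
    (ℓ z)⁻¹ • L z ∈ segment 𝕜 ((ℓ x)⁻¹ • L x) ((ℓ y)⁻¹ • L y) := by
  have hpos : 0 < ℓ z := ((convex_Ioi 0).affine_preimage ℓ).segment_subset hx hy hz
  obtain ⟨a, b, ha, hb, hab, rfl⟩ := hz
  have hℓ : ℓ (a • x + b • y) = a * ℓ x + b * ℓ y := by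
    rw [Convex.combo_affine_apply hab, smul_eq_mul, smul_eq_mul]
  rw [hℓ] at hpos ⊢
  refine ⟨a * ℓ x / (a * ℓ x + b * ℓ y), b * ℓ y / (a * ℓ x + b * ℓ y), by positivity,
    by positivity, by field_simp, ?_⟩
  rw [Convex.combo_affine_apply hab]
  match_scalars <;> field_simp

theorem perspective_mem_convexHull (L : E →ᵃ[𝕜] F) (ℓ : E →ᵃ[𝕜] 𝕜) {s : Set E}
    (hs : ∀ x ∈ s, 0 < ℓ x) {z : E} (hz : z ∈ convexHull 𝕜 s) :
    (ℓ z)⁻¹ • L z ∈ convexHull 𝕜 ((fun x ↦ (ℓ x)⁻¹ • L x) '' s) := by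
  set C := convexHull 𝕜 ((fun x ↦ (ℓ x)⁻¹ • L x) '' s)
  suffices h : convexHull 𝕜 s ⊆ {z | 0 < ℓ z ∧ (ℓ z)⁻¹ • L z ∈ C} from (h hz).2
  refine convexHull_min (fun x hx ↦ ⟨hs x hx, subset_convexHull 𝕜 _ ⟨x, hx, rfl⟩⟩) ?_
  rw [convex_iff_segment_subset]
  rintro x ⟨hx, hLx⟩ y ⟨hy, hLy⟩ z hz
  exact ⟨((convex_Ioi 0).affine_preimage ℓ).segment_subset hx hy hz,
    (convex_convexHull 𝕜 _).segment_subset hLx hLy (perspective_mem_segment L ℓ hx hy hz)⟩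

end Perspective

section Crossing

variable {𝕜 E : Type*} [Field 𝕜] [AddCommGroup E] [Module 𝕜 E] (f : E →ₗ[𝕜] 𝕜)

/-- The point where the line through `u` and `v` meets `ker f` (junk value `0` when `f u = f v`). -/
def kerCrossing (u v : E) : E := (f v - f u)⁻¹ • (f v • u - f u • v)

theorem map_kerCrossing (u v : E) : f (kerCrossing f u v) = 0 := by
  simp only [kerCrossing, map_smul, map_sub, smul_eq_mul]
  ring

variable [LinearOrder 𝕜] [IsStrictOrderedRing 𝕜]

theorem kerCrossing_mem_segment {u v : E} (hu : f u < 0) (hv : 0 ≤ f v) :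
    kerCrossing f u v ∈ segment 𝕜 u v := by
  have hd : 0 < f v - f u := by linarith
  refine ⟨f v / (f v - f u), -f u / (f v - f u), by positivity, div_nonneg (by linarith) hd.le,
    by field_simp; ring, ?_⟩
  simp only [kerCrossing]
  match_scalars <;> field_simp

theorem mem_segment_kerCrossing {p q x : E} (hp : 0 ≤ f p) (hq : f q < 0)
    (hx : x ∈ segment 𝕜 p q) (hfx : 0 ≤ f x) : x ∈ segment 𝕜 p (kerCrossing f q p) := by
  obtain ⟨a, b, ha, hb, hab, rfl⟩ := hx
  simp only [map_add, map_smul, smul_eq_mul] at hfx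
  rcases hp.eq_or_lt with hp0 | hp
  · obtain rfl : b = 0 := by nlinarith
    obtain rfl : a = 1 := by linarith
    simpa using left_mem_segment 𝕜 p (kerCrossing f q p)
  · refine ⟨(a * f p + b * f q) / f p, b * (f p - f q) / f p, by positivity,
      div_nonneg (mul_nonneg hb (by linarith)) hp.le, ?_, ?_⟩
    · rw [← add_div, div_eq_one_iff_eq hp.ne']
      linear_combination f p * hab
    have hd : f p - f q ≠ 0 := by linarith
    simp only [kerCrossing]
    match_scalars <;> field_simp; ring

theorem kerCrossing_mem_convexHull_image_right {t : Set E} {u p : E} (ht : ∀ v ∈ t, f u < f v)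
    (hp : p ∈ convexHull 𝕜 t) : kerCrossing f u p ∈ convexHull 𝕜 (kerCrossing f u '' t) := by
  set L := (f.smulRight u - f u • LinearMap.id).toAffineMap
  set ℓ := f.toAffineMap - AffineMap.const 𝕜 E (f u)
  have h : kerCrossing f u = fun v ↦ (ℓ v)⁻¹ • L v := by ext; simp [L, ℓ, kerCrossing]
  exact h ▸ perspective_mem_convexHull L ℓ (fun v hv ↦ by simpa [ℓ] using ht v hv) hp

theorem kerCrossing_mem_convexHull_image_left {s : Set E} {v q : E} (hs : ∀ u ∈ s, f u < f v)
    (hq : q ∈ convexHull 𝕜 s) :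
    kerCrossing f q v ∈ convexHull 𝕜 ((kerCrossing f · v) '' s) := by
  set L := (f v • LinearMap.id - f.smulRight v).toAffineMap
  set ℓ := AffineMap.const 𝕜 E (f v) - f.toAffineMap
  have h : (kerCrossing f · v) = fun u ↦ (ℓ u)⁻¹ • L u := by ext; simp [L, ℓ, kerCrossing]
  exact h ▸ perspective_mem_convexHull L ℓ (fun u hu ↦ by simpa [ℓ] using hs u hu) hq

theorem kerCrossing_mem_convexHull_image2 {s t : Set E} (hs : ∀ u ∈ s, f u < 0)
    (ht : ∀ v ∈ t, 0 ≤ f v) {q p : E} (hq : q ∈ convexHull 𝕜 s) (hp : p ∈ convexHull 𝕜 t) :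
    kerCrossing f q p ∈ convexHull 𝕜 (image2 (kerCrossing f) s t) := by
  have hfp : 0 ≤ f p := convexHull_min ht (convex_halfSpace_ge f.isLinear 0) hp
  refine convexHull_min ?_ (convex_convexHull 𝕜 _)
    (kerCrossing_mem_convexHull_image_left f (fun u hu ↦ (hs u hu).trans_le hfp) hq)
  rintro _ ⟨u, hu, rfl⟩
  exact convexHull_mono (image_subset_image2_right hu)
    (kerCrossing_mem_convexHull_image_right f (fun v hv ↦ (hs u hu).trans_le (ht v hv)) hp)

theorem convexHull_inter_halfSpace (V : Set E) :
    convexHull 𝕜 ({v ∈ V | 0 ≤ f v} ∪ image2 (kerCrossing f) {u ∈ V | f u < 0} {v ∈ V | 0 ≤ f v})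
      = convexHull 𝕜 V ∩ {x | 0 ≤ f x} := by
  apply subset_antisymm
  · refine convexHull_min ?_ ((convex_convexHull 𝕜 V).inter (convex_halfSpace_ge f.isLinear 0))
    rintro _ (⟨hv, hfv⟩ | ⟨u, ⟨hu, hfu⟩, v, ⟨hv, hfv⟩, rfl⟩)
    · exact ⟨subset_convexHull 𝕜 V hv, hfv⟩
    · exact ⟨segment_subset_convexHull hu hv (kerCrossing_mem_segment f hfu hfv),
        (map_kerCrossing f u v).ge⟩
  rintro x ⟨hx, hfx⟩
  set Vpos := {v ∈ V | 0 ≤ f v}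
  set Vneg := {u ∈ V | f u < 0}
  have hV : V = Vpos ∪ Vneg := by ext v; simp [Vpos, Vneg, ← and_or_left, le_or_gt]
  rcases Vneg.eq_empty_or_nonempty with hneg | hneg
  · rw [hV, hneg, union_empty] at hx
    exact convexHull_mono subset_union_left hx
  rcases Vpos.eq_empty_or_nonempty with hpos | hpos
  · rw [hV, hpos, empty_union] at hx
    have hfx' : f x < 0 := convexHull_min (fun u hu ↦ hu.2) (convex_halfSpace_lt f.isLinear 0) hx
    exact absurd hfx hfx'.not_ge
  rw [hV, convexHull_union hpos hneg] at hx
  obtain ⟨p, hp, q, hq, hxpq⟩ := mem_convexJoin.1 hx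
  have hfp : 0 ≤ f p := convexHull_min (fun v hv ↦ hv.2) (convex_halfSpace_ge f.isLinear 0) hp
  have hfq : f q < 0 := convexHull_min (fun u hu ↦ hu.2) (convex_halfSpace_lt f.isLinear 0) hq
  refine (convex_convexHull 𝕜 _).segment_subset (convexHull_mono subset_union_left hp) ?_
    (mem_segment_kerCrossing f hfp hfq hxpq hfx)
  exact convexHull_mono subset_union_right
    (kerCrossing_mem_convexHull_image2 f (fun u hu ↦ hu.2) (fun v hv ↦ hv.2) hq hp)

end Crossing

section Polytope

def IsPolytope (𝕜 : Type*) {E : Type*} [Semiring 𝕜] [PartialOrder 𝕜] [AddCommMonoid E]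
    [Module 𝕜 E] (P : Set E) : Prop :=
  ∃ V : Set E, V.Finite ∧ convexHull 𝕜 V = P

variable {𝕜 E F : Type*}

theorem IsPolytope.image [Semiring 𝕜] [PartialOrder 𝕜] [AddCommMonoid E] [Module 𝕜 E]
    [AddCommMonoid F] [Module 𝕜 F] {P : Set E} (hP : IsPolytope 𝕜 P) (L : E →ₗ[𝕜] F) :
    IsPolytope 𝕜 (L '' P) := by
  obtain ⟨V, hV, rfl⟩ := hP
  exact ⟨L '' V, hV.image L, (L.image_convexHull V).symm⟩

variable [Field 𝕜] [LinearOrder 𝕜] [IsStrictOrderedRing 𝕜] [AddCommGroup E] [Module 𝕜 E]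
  {P : Set E}

theorem IsPolytope.inter_halfSpace (hP : IsPolytope 𝕜 P) (f : E →ₗ[𝕜] 𝕜) :
    IsPolytope 𝕜 (P ∩ {x | 0 ≤ f x}) := by
  obtain ⟨V, hV, rfl⟩ := hP
  exact ⟨_, (hV.sep _).union ((hV.sep _).image2 _ (hV.sep _)), convexHull_inter_halfSpace f V⟩

theorem IsPolytope.inter_halfSpaces {ι : Type*} [Finite ι] (hP : IsPolytope 𝕜 P)
    (g : ι → E →ₗ[𝕜] 𝕜) : IsPolytope 𝕜 (P ∩ {x | ∀ i, 0 ≤ g i x}) := by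
  classical
  have hfin (F : Finset ι) : IsPolytope 𝕜 (P ∩ {x | ∀ i ∈ F, 0 ≤ g i x}) := by
    induction F using Finset.induction_on with
    | empty => simpa using hP
    | insert a F _ ih =>
      convert ih.inter_halfSpace (g a) using 1
      ext x
      simp only [Finset.forall_mem_insert, mem_inter_iff, mem_ofPred_eq]
      tauto
  cases nonempty_fintype ι
  simpa using hfin Finset.univ

end Polytope

section ReLU

variable {n : ℕ}

def signedCoord (s : Fin n → Bool) (i : Fin n) : (Fin n → ℝ) →ₗ[ℝ] ℝ :=
  if s i then LinearMap.proj i else -LinearMap.proj i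

def orthantProj (s : Fin n → Bool) : (Fin n → ℝ) →ₗ[ℝ] (Fin n → ℝ) :=
  LinearMap.pi fun i ↦ if s i then LinearMap.proj i else 0

theorem relu_eq_orthantProj {s : Fin n → Bool} {x : Fin n → ℝ}
    (hx : ∀ i, 0 ≤ signedCoord s i x) : relu x = orthantProj s x := by
  funext i
  have hxi := hx i
  by_cases h : s i <;> simp_all [relu, signedCoord, orthantProj]

theorem signedCoord_sign_nonneg (x : Fin n → ℝ) (i : Fin n) :
    0 ≤ signedCoord (fun j ↦ decide (0 ≤ x j)) i x := by
  by_cases h : 0 ≤ x i <;> simp [signedCoord, h]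
  linarith

theorem image_relu_eq_iUnion (S : Set (Fin n → ℝ)) :
    relu '' S = ⋃ s, orthantProj s '' (S ∩ {x | ∀ i, 0 ≤ signedCoord s i x}) := by
  ext y
  simp only [mem_image, mem_iUnion, mem_inter_iff, mem_ofPred_eq]
  constructor
  · rintro ⟨x, hx, rfl⟩
    have hxs := signedCoord_sign_nonneg x
    exact ⟨_, x, ⟨hx, hxs⟩, (relu_eq_orthantProj hxs).symm⟩
  · rintro ⟨s, x, ⟨hx, hxs⟩, rfl⟩
    exact ⟨x, hx, relu_eq_orthantProj hxs⟩

end ReLU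

/-- The ReLU image of a single polytope is a union of at most `2^n` polytopes,
indexed by sign patterns `Fin n → Bool`. -/
theorem relu_image_polytope_union {n : ℕ} (V : Set (Fin n → ℝ)) (hV : V.Finite) :
    ∃ W : (Fin n → Bool) → Set (Fin n → ℝ),
      (∀ s, (W s).Finite) ∧
      relu '' (convexHull ℝ V) = ⋃ s, convexHull ℝ (W s) := by
  have hpiece (s : Fin n → Bool) : IsPolytope ℝ
      (orthantProj s '' (convexHull ℝ V ∩ {x | ∀ i, 0 ≤ signedCoord s i x})) :=
    (IsPolytope.inter_halfSpaces ⟨V, hV, rfl⟩ (signedCoord s)).image (orthantProj s)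
  choose W hW hWeq using hpiece
  exact ⟨W, hW, by simp only [image_relu_eq_iUnion, hWeq]⟩
end

section
/- A coordinate ReLU image of a polytope consists of at most two polytopes: for every finite set V ⊆ (Fin n → ℝ) and every index d : Fin n, the image of convexHull ℝ V under r_d equals convexHull ℝ ({v ∈ V | 0 ≤ v d} ∪ I_d(V)) ∪ convexHull ℝ ({Proj_d v | v ∈ V, v d ≤ 0} ∪ I_d(V)). -/
/-!
For a linear functional `f`, split a convex combination `x = ∑ wᵢ • zᵢ` with `0 ≤ f x` as
`x = x₊ + x₋`, the parts on the points with `0 ≤ f` and with `f < 0`, of `f`-masses `a` and `-b`,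
so that `b ≤ a`. Each pair `(p, q)` of such points contributes the crossing point of `[p, q]`
with the hyperplane `{f = 0}`, weighted by `w p * w q * (f p - f q)`; these contributions add up
to `b • x₊ + a • x₋`. Hence `a • x = (a - b) • x₊ + (pair sum)` is a nonnegative combination of
points with `0 ≤ f` and crossing points (if `b = 0`, all weight is on `x₊`), and
`conv V ∩ {0 ≤ f} = conv ({v ∈ V | 0 ≤ f v} ∪ I)`; likewise for `f ≤ 0`. The theorem follows
because `r_d` is the identity on `{0 ≤ x d}` and the linear map `Proj_d` on `{x d ≤ 0}`, and
`Proj_d` fixes `I_d(V)`.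
-/

/-- The coordinate ReLU map acting only on dimension `d`. -/
noncomputable def reluD {n : ℕ} (d : Fin n) (x : Fin n → ℝ) : Fin n → ℝ :=
  Function.update x d (max (x d) 0)

/-- The coordinate projection onto the hyperplane `{x | x d = 0}`. -/
def projD {n : ℕ} (d : Fin n) (x : Fin n → ℝ) : Fin n → ℝ :=
  Function.update x d 0

/-- The intersection-point set `I_d(V)`. -/
def interPts {n : ℕ} (d : Fin n) (V : Set (Fin n → ℝ)) : Set (Fin n → ℝ) :=
  {x | ∃ v ∈ V, ∃ w ∈ V, v d > 0 ∧ w d < 0 ∧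
    x = ((-(w d)) / (v d - w d)) • v + ((v d) / (v d - w d)) • w}

open Finset

section CrossPoints

variable {E : Type*} [AddCommGroup E] [Module ℝ E] (f : E →ₗ[ℝ] ℝ)

noncomputable def crossPoint (v w : E) : E := (-f w / (f v - f w)) • v + (f v / (f v - f w)) • w

def crossPoints (s : Set E) : Set E :=
  {x | ∃ v ∈ s, ∃ w ∈ s, 0 < f v ∧ f w < 0 ∧ x = crossPoint f v w}

variable {f}

theorem sub_smul_crossPoint {v w : E} (h : f v ≠ f w) :
    (f v - f w) • crossPoint f v w = f v • w - f w • v := by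
  have h' : f v - f w ≠ 0 := sub_ne_zero.2 h
  rw [crossPoint, smul_add, smul_smul, smul_smul, mul_div_cancel₀ _ h', mul_div_cancel₀ _ h',
    neg_smul, add_comm, ← sub_eq_add_neg]

theorem map_crossPoint {v w : E} (h : f v ≠ f w) : f (crossPoint f v w) = 0 := by
  have := congrArg f (sub_smul_crossPoint h)
  simp only [map_smul, map_sub, smul_eq_mul, mul_comm (f v), sub_self] at this
  exact (mul_eq_zero.1 this).resolve_left (sub_ne_zero.2 h)

theorem crossPoint_of_map_eq_zero {v w : E} (hv : f v = 0) (hw : f w ≠ 0) :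
    crossPoint f v w = v := by
  simp [crossPoint, hv, hw]

theorem crossPoint_mem_segment {v w : E} (hv : 0 < f v) (hw : f w < 0) :
    crossPoint f v w ∈ segment ℝ v w := by
  have h : 0 < f v - f w := by linarith
  refine ⟨_, _, div_nonneg (by linarith) h.le, div_nonneg hv.le h.le, ?_, rfl⟩
  rw [← add_div, div_eq_one_iff_eq h.ne']
  ring

theorem crossPoints_subset_convexHull (s : Set E) : crossPoints f s ⊆ convexHull ℝ s := by
  rintro _ ⟨v, hv, w, hw, hfv, hfw, rfl⟩
  exact segment_subset_convexHull hv hw (crossPoint_mem_segment hfv hfw)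

theorem crossPoint_neg (v w : E) : crossPoint (-f) w v = crossPoint f v w := by
  simp only [crossPoint, LinearMap.neg_apply, neg_neg, sub_neg_eq_add]
  rw [add_comm]
  congr 2 <;> ring

theorem crossPoints_neg (s : Set E) : crossPoints (-f) s = crossPoints f s := by
  ext x
  simp only [crossPoints, Set.mem_ofPred_eq, LinearMap.neg_apply, neg_pos, neg_lt_zero]
  constructor
  · rintro ⟨v, hv, w, hw, hfv, hfw, rfl⟩
    exact ⟨w, hw, v, hv, hfw, hfv, crossPoint_neg w v⟩
  · rintro ⟨v, hv, w, hw, hfv, hfw, rfl⟩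
    exact ⟨w, hw, v, hv, hfw, hfv, (crossPoint_neg v w).symm⟩

theorem mem_convexHull_of_smul_eq_sum {ι : Type*} {T : Set E} {x : E} {u : Finset ι}
    {c : ι → ℝ} {z : ι → E} (hc : ∀ i ∈ u, 0 ≤ c i) (hz : ∀ i ∈ u, z i ∈ T)
    (hpos : 0 < ∑ i ∈ u, c i) (hx : (∑ i ∈ u, c i) • x = ∑ i ∈ u, c i • z i) :
    x ∈ convexHull ℝ T := by
  have := u.centerMass_mem_convexHull hc hpos hz
  rwa [centerMass, ← hx, inv_smul_smul₀ hpos.ne'] at this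

section

variable {ι : Type*} (P N : Finset ι) (w : ι → ℝ) (z : ι → E)

theorem sum_product_mul_sub :
    ∑ ij ∈ P ×ˢ N, w ij.1 * w ij.2 * (f (z ij.1) - f (z ij.2)) =
      (∑ i ∈ P, w i * f (z i)) * ∑ j ∈ N, w j - (∑ j ∈ N, w j * f (z j)) * ∑ i ∈ P, w i := by
  rw [sum_mul_sum, sum_mul_sum, sum_comm (s := N), ← sum_sub_distrib, sum_product]
  refine sum_congr rfl fun i _ => ?_
  rw [← sum_sub_distrib]
  exact sum_congr rfl fun j _ => by ring

theorem sum_product_smul_crossPoint (h : ∀ i ∈ P, ∀ j ∈ N, f (z i) ≠ f (z j)) :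
    ∑ ij ∈ P ×ˢ N, (w ij.1 * w ij.2 * (f (z ij.1) - f (z ij.2))) • crossPoint f (z ij.1) (z ij.2) =
      (∑ i ∈ P, w i * f (z i)) • ∑ j ∈ N, w j • z j
        - (∑ j ∈ N, w j * f (z j)) • ∑ i ∈ P, w i • z i := by
  rw [sum_smul_sum, sum_smul_sum, sum_comm (s := N), ← sum_sub_distrib, sum_product]
  refine sum_congr rfl fun i hi => ?_
  rw [← sum_sub_distrib]
  refine sum_congr rfl fun j hj => ?_
  rw [mul_smul, sub_smul_crossPoint (h i hi j hj), smul_sub, smul_smul, smul_smul, smul_smul,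
    smul_smul]
  congr 2 <;> ring

theorem sum_add_sum_mem_convexHull_of_neg {s : Set E} (hw₀ : ∀ i, 0 ≤ w i) (hz : ∀ i, z i ∈ s)
    (hP : ∀ i ∈ P, 0 ≤ f (z i)) (hN : ∀ j ∈ N, f (z j) < 0)
    (hw₁ : ∑ i ∈ P, w i + ∑ j ∈ N, w j = 1)
    (hx : 0 ≤ ∑ i ∈ P, w i * f (z i) + ∑ j ∈ N, w j * f (z j))
    (hb : ∑ j ∈ N, w j * f (z j) < 0) :
    ∑ i ∈ P, w i • z i + ∑ j ∈ N, w j • z j ∈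
      convexHull ℝ ({v ∈ s | 0 ≤ f v} ∪ crossPoints f s) := by
  set a := ∑ i ∈ P, w i * f (z i)
  set b := ∑ j ∈ N, w j * f (z j)
  have hweight : ∑ k ∈ P.disjSum (P ×ˢ N), Sum.elim (fun i => (a + b) * w i)
      (fun ij => w ij.1 * w ij.2 * (f (z ij.1) - f (z ij.2))) k = a := by
    simp only [sum_disjSum, Sum.elim_inl, Sum.elim_inr]
    rw [sum_product_mul_sub, ← mul_sum]
    linear_combination a * hw₁
  refine mem_convexHull_of_smul_eq_sum (u := P.disjSum (P ×ˢ N))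
    (z := Sum.elim z fun ij => crossPoint f (z ij.1) (z ij.2)) ?_ ?_ (by rw [hweight]; linarith) ?_
  · rintro (i | ⟨i, j⟩) hk
    · exact mul_nonneg hx (hw₀ i)
    · obtain ⟨hi, hj⟩ := mem_product.1 (inr_mem_disjSum.1 hk)
      exact mul_nonneg (mul_nonneg (hw₀ i) (hw₀ j)) (by linarith [hP i hi, hN j hj])
  · rintro (i | ⟨i, j⟩) hk
    · exact Or.inl ⟨hz i, hP i (inl_mem_disjSum.1 hk)⟩
    · obtain ⟨hi, hj⟩ := mem_product.1 (inr_mem_disjSum.1 hk)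
      rcases (hP i hi).eq_or_lt with hi0 | hi0
      · rw [Sum.elim_inr, crossPoint_of_map_eq_zero hi0.symm (hN j hj).ne]
        exact Or.inl ⟨hz i, hP i hi⟩
      · exact Or.inr ⟨z i, hz i, z j, hz j, hi0, hN j hj, rfl⟩
  · simp only [hweight, sum_disjSum, Sum.elim_inl, Sum.elim_inr]
    rw [sum_product_smul_crossPoint _ _ _ _ fun i hi j hj => by linarith [hP i hi, hN j hj]]
    simp only [mul_smul, ← smul_sum]
    rw [smul_add, add_smul]
    abel

end

theorem sum_smul_mem_convexHull_of_nonneg {ι : Type*} [Fintype ι] {s : Set E} {w : ι → ℝ}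
    {z : ι → E} (hw₀ : ∀ i, 0 ≤ w i) (hw₁ : ∑ i, w i = 1) (hz : ∀ i, z i ∈ s)
    (hx : 0 ≤ f (∑ i, w i • z i)) :
    ∑ i, w i • z i ∈ convexHull ℝ ({v ∈ s | 0 ≤ f v} ∪ crossPoints f s) := by
  classical
  set P := univ.filter fun i => 0 ≤ f (z i)
  set N := univ.filter fun i => ¬0 ≤ f (z i)
  have hP : ∀ i ∈ P, 0 ≤ f (z i) := fun i hi => (mem_filter.1 hi).2
  have hN : ∀ j ∈ N, f (z j) < 0 := fun j hj => not_le.1 (mem_filter.1 hj).2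
  have hw_split : ∑ i ∈ P, w i + ∑ j ∈ N, w j = 1 := (sum_filter_add_sum_filter_not _ _ _).trans hw₁
  have hx_split : ∑ i, w i • z i = ∑ i ∈ P, w i • z i + ∑ j ∈ N, w j • z j :=
    (sum_filter_add_sum_filter_not _ _ _).symm
  rw [hx_split] at hx ⊢
  simp only [map_add, map_sum, map_smul, smul_eq_mul] at hx
  have hb : ∑ j ∈ N, w j * f (z j) ≤ 0 :=
    sum_nonpos fun j hj => mul_nonpos_of_nonneg_of_nonpos (hw₀ j) (hN j hj).le
  rcases hb.lt_or_eq with hb | hb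
  · exact sum_add_sum_mem_convexHull_of_neg P N w z hw₀ hz hP hN hw_split hx hb
  have hNw : ∀ j ∈ N, w j = 0 := fun j hj =>
    (mul_eq_zero.1 ((sum_eq_zero_iff_of_nonpos fun k hk =>
      mul_nonpos_of_nonneg_of_nonpos (hw₀ k) (hN k hk).le).1 hb j hj)).resolve_right (hN j hj).ne
  rw [sum_eq_zero (s := N) fun j hj => by rw [hNw j hj, zero_smul], add_zero]
  refine (convex_convexHull ℝ _).sum_mem (fun i _ => hw₀ i) ?_
    fun i hi => subset_convexHull ℝ _ (Or.inl ⟨hz i, hP i hi⟩)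
  rw [← hw_split, sum_eq_zero hNw, add_zero]

theorem map_eq_zero_of_mem_crossPoints {s : Set E} {x : E} (hx : x ∈ crossPoints f s) :
    f x = 0 := by
  obtain ⟨v, -, w, -, hv, hw, rfl⟩ := hx
  exact map_crossPoint (by linarith)

theorem convexHull_sep_nonneg_union_crossPoints (s : Set E) :
    convexHull ℝ ({v ∈ s | 0 ≤ f v} ∪ crossPoints f s) = convexHull ℝ s ∩ {x | 0 ≤ f x} := by
  refine (convexHull_min ?_
    ((convex_convexHull ℝ s).inter (convex_halfSpace_ge f.isLinear 0))).antisymm ?_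
  · rintro x (⟨hx, hfx⟩ | hx)
    · exact ⟨subset_convexHull ℝ s hx, hfx⟩
    · exact ⟨crossPoints_subset_convexHull s hx, (map_eq_zero_of_mem_crossPoints hx).ge⟩
  · rintro x ⟨hx, hfx⟩
    obtain ⟨ι, _, w, z, hw₀, hw₁, hz, rfl⟩ := mem_convexHull_iff_exists_fintype.1 hx
    exact sum_smul_mem_convexHull_of_nonneg hw₀ hw₁ hz hfx

theorem convexHull_sep_nonpos_union_crossPoints (s : Set E) :
    convexHull ℝ ({v ∈ s | f v ≤ 0} ∪ crossPoints f s) = convexHull ℝ s ∩ {x | f x ≤ 0} := by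
  simpa only [LinearMap.neg_apply, neg_nonneg, crossPoints_neg] using
    convexHull_sep_nonneg_union_crossPoints (f := -f) s

end CrossPoints

section ReLU

variable {n : ℕ} (d : Fin n)

theorem reluD_of_nonneg {x : Fin n → ℝ} (h : 0 ≤ x d) : reluD d x = x := by
  rw [reluD, max_eq_left h, Function.update_eq_self]

theorem reluD_of_nonpos {x : Fin n → ℝ} (h : x d ≤ 0) : reluD d x = projD d x := by
  rw [reluD, projD, max_eq_right h]

theorem projD_of_eq_zero {x : Fin n → ℝ} (h : x d = 0) : projD d x = x := by
  rw [projD, ← h, Function.update_eq_self]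

theorem isLinearMap_projD : IsLinearMap ℝ (projD d) where
  map_add x y := by rw [projD, projD, projD, ← Function.update_add, add_zero]
  map_smul c x := by rw [projD, projD, ← Function.update_smul, smul_zero]

theorem image_reluD (S : Set (Fin n → ℝ)) :
    reluD d '' S = S ∩ {x | 0 ≤ x d} ∪ projD d '' (S ∩ {x | x d ≤ 0}) := by
  ext y
  constructor
  · rintro ⟨x, hx, rfl⟩
    rcases le_total 0 (x d) with h | h
    · exact Or.inl (by rw [reluD_of_nonneg d h]; exact ⟨hx, h⟩)
    · exact Or.inr ⟨x, ⟨hx, h⟩, (reluD_of_nonpos d h).symm⟩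
  · rintro (⟨hy, h⟩ | ⟨x, ⟨hx, h⟩, rfl⟩)
    · exact ⟨y, hy, reluD_of_nonneg d h⟩
    · exact ⟨x, hx, reluD_of_nonpos d h⟩

theorem interPts_eq_crossPoints (V : Set (Fin n → ℝ)) :
    interPts d V = crossPoints (LinearMap.proj d) V :=
  rfl

theorem apply_eq_zero_of_mem_interPts {V : Set (Fin n → ℝ)} {x : Fin n → ℝ}
    (hx : x ∈ interPts d V) : x d = 0 :=
  map_eq_zero_of_mem_crossPoints (f := LinearMap.proj (R := ℝ) (φ := fun _ => ℝ) d) hx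

theorem image_projD_sep_nonpos_union_interPts (V : Set (Fin n → ℝ)) :
    projD d '' ({v ∈ V | v d ≤ 0} ∪ interPts d V) =
      {y | ∃ v ∈ V, v d ≤ 0 ∧ y = projD d v} ∪ interPts d V := by
  rw [Set.image_union, Set.EqOn.image_eq_self (f := projD d) (s := interPts d V) fun x hx =>
    projD_of_eq_zero d (apply_eq_zero_of_mem_interPts d hx)]
  congr 1
  ext y
  simp only [Set.mem_image, Set.mem_ofPred_eq, eq_comm (a := y)]
  exact ⟨fun ⟨v, ⟨hv, hvd⟩, h⟩ => ⟨v, hv, hvd, h⟩, fun ⟨v, hv, hvd, h⟩ => ⟨v, ⟨hv, hvd⟩, h⟩⟩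

end ReLU

theorem reluD_image_polytope_general {n : ℕ} (V : Set (Fin n → ℝ)) (d : Fin n) :
    reluD d '' (convexHull ℝ V) =
      convexHull ℝ ({v ∈ V | 0 ≤ v d} ∪ interPts d V) ∪
      convexHull ℝ ({y | ∃ v ∈ V, v d ≤ 0 ∧ y = projD d v} ∪ interPts d V) := by
  have hnonneg := convexHull_sep_nonneg_union_crossPoints (f := LinearMap.proj d) V
  have hnonpos := convexHull_sep_nonpos_union_crossPoints (f := LinearMap.proj d) V
  simp only [LinearMap.proj_apply, ← interPts_eq_crossPoints] at hnonneg hnonpos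
  rw [image_reluD, ← image_projD_sep_nonpos_union_interPts,
    ← (isLinearMap_projD d).image_convexHull, hnonneg, hnonpos]

/-- A coordinate ReLU image of a polytope consists of at most two polytopes. -/
theorem reluD_image_polytope {n : ℕ} (V : Set (Fin n → ℝ))
    (hV : V.Finite) (d : Fin n) :
    reluD d '' (convexHull ℝ V) =
      convexHull ℝ ({v ∈ V | 0 ≤ v d} ∪ interPts d V) ∪
      convexHull ℝ ({y | ∃ v ∈ V, v d ≤ 0 ∧ y = projD d v} ∪ interPts d V) :=
  reluD_image_polytope_general V d
end
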